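/- Let p ≥ 2 be an even integer and let S be a continuous function on [0,T] in V_p(π) admitting a continuous local time L^{p,c} of order p (uniform limit of discrete local times, jointly continuous). Then for every continuous function g : ℝ → ℝ and every t ∈ [0,T], ∫_0^t g(S(u)) d[S]^p(u) = p ∫_ℝ g(x) L_t^{p,c}(x) dx, where the left side is a Lebesgue-Stieltjes integral against the continuous nondecreasing p-th variation function [S]^p. -/

import Mathlib

open Filter MeasureTheory Set

/-- A nested sequence of partitions `0 = t_0^n < t_1^n < ... < t_{N(n)}^n = T` of `[0, T]`. -/
structure PartitionSeq (T : ℝ) where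
  N : ℕ → ℕ
  pos : ∀ n, 0 < N n
  pt : ℕ → ℕ → ℝ
  pt_zero : ∀ n, pt n 0 = 0
  pt_last : ∀ n, pt n (N n) = T
  pt_mono : ∀ n, ∀ j, j < N n → pt n j < pt n (j + 1)
  nested : ∀ n, ∀ j, j ≤ N n → ∃ j', j' ≤ N (n + 1) ∧ pt (n + 1) j' = pt n j

/-- Oscillation of `S` along the partition `π_n`. -/
noncomputable def oscP {T : ℝ} (S : ℝ → ℝ) (P : PartitionSeq T) (n : ℕ) : ℝ :=
  sSup {y | ∃ j < P.N n, ∃ u ∈ Icc (P.pt n j) (P.pt n (j + 1)),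
    ∃ v ∈ Icc (P.pt n j) (P.pt n (j + 1)), y = |S u - S v|}

/-- Mesh of the partition `π_n`. -/
noncomputable def meshP {T : ℝ} (P : PartitionSeq T) (n : ℕ) : ℝ :=
  sSup {y | ∃ j < P.N n, y = P.pt n (j + 1) - P.pt n j}

/-- Partial sums `Σ_{t_j ≤ t} |S(t_{j+1}) - S(t_j)|^p` of `p`-th variation along `π_n`. -/
noncomputable def pvarSum {T : ℝ} (S : ℝ → ℝ) (P : PartitionSeq T) (p : ℝ) (n : ℕ) (t : ℝ) : ℝ :=
  ∑ j ∈ Finset.range (P.N n),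
    if P.pt n j ≤ t then |S (P.pt n (j + 1)) - S (P.pt n j)| ^ p else 0

/-- Discrete local time of order `p` of `S` along `π_n`:
`L_t^{π_n;p}(x) = Σ_{t_j ≤ t} 1_{⦇S(t_j),S(t_{j+1})⦈}(x) |S(t_{j+1}) - x|^{p-1}`. -/
noncomputable def discLT {T : ℝ} (S : ℝ → ℝ) (P : PartitionSeq T) (p : ℕ) (n : ℕ)
    (t x : ℝ) : ℝ :=
  ∑ j ∈ Finset.range (P.N n),
    if P.pt n j ≤ t then
      Set.indicator (Set.uIoc (S (P.pt n j)) (S (P.pt n (j + 1))))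
        (fun _ => |S (P.pt n (j + 1)) - x| ^ (p - 1)) x
    else 0

/-- `S` has a continuous local time `L` of order `p` along `P`: the oscillations tend to `0`,
the discrete local times converge uniformly in `x` for each `t ∈ [0,T]`, and the limit is
jointly continuous. -/
def HasCLT {T : ℝ} (P : PartitionSeq T) (p : ℕ) (S : ℝ → ℝ) (L : ℝ → ℝ → ℝ) : Prop :=
  Tendsto (oscP S P) atTop (nhds 0) ∧
  (∀ t ∈ Icc (0 : ℝ) T, TendstoUniformly (fun n x => discLT S P p n t x) (fun x => L t x) atTop) ∧
  Continuous (fun q : ℝ × ℝ => L q.1 q.2)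

/-- `S ∈ V_p(π)` with `p`-th variation function `V`. -/
def HasPVar {T : ℝ} (P : PartitionSeq T) (p : ℝ) (S : ℝ → ℝ) (V : ℝ → ℝ) : Prop :=
  Tendsto (oscP S P) atTop (nhds 0) ∧
  ContinuousOn V (Icc 0 T) ∧ MonotoneOn V (Icc 0 T) ∧
  ∀ t ∈ Icc (0 : ℝ) T, Tendsto (fun n => pvarSum S P p n t) atTop (nhds (V t))

/-!
Both sides are limits of the same discrete sums along `π_n`. The measure
`∑ⱼ |S(t_{j+1}) - S(t_j)|^p δ_{t_j}` has the `p`-th variation sums as distribution function, so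
the Riemann–Stieltjes sums `∑_{t_j ≤ t} g(S t_j) |S(t_{j+1}) - S(t_j)|^p` converge to
`∫_{(0,t]} g ∘ S d[S]^p`: convergence of distribution functions at the points of a fine grid
suffices for continuous integrands. On the other hand `p ∫_{⦇a,b⦈} |b - x|^{p-1} dx = |b - a|^p`,
so once the oscillation of `S` along `π_n` is below the modulus of continuity of `g` at scale `ε`,
`p ∫ g L^{π_n;p}_t` differs from the Riemann–Stieltjes sum by at most `ε` times the `p`-th
variation sum; and it tends to `p ∫ g L_t` because the discrete local times converge uniformly
and vanish off the compact range of `S`.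
-/

open scoped Topology NNReal

lemma tendsto_of_forall_eventually_abs_sub_le {ι : Type*} {l : Filter ι} {x : ι → ℝ} {y C : ℝ}
    (h : ∀ ε > 0, ∀ᶠ n in l, |x n - y| ≤ ε * C) : Tendsto x l (𝓝 y) := by
  refine Metric.tendsto_nhds.mpr fun ε hε => ?_
  have hε' : 0 < ε / (2 * (|C| + 1)) := by positivity
  filter_upwards [h _ hε'] with n hn
  rw [Real.dist_eq]
  calc |x n - y| ≤ ε / (2 * (|C| + 1)) * |C| := hn.trans (by gcongr; exact le_abs_self C)
    _ < ε := by
      rw [div_mul_eq_mul_div, div_lt_iff₀ (by positivity)]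
      nlinarith [abs_nonneg C]

lemma measureReal_Ioc_eq_sub (m : Measure ℝ) {a y z : ℝ} (hay : a ≤ y) (hyz : y ≤ z)
    (hz : m (Ioc a z) ≠ ⊤) :
    m.real (Ioc y z) = m.real (Ioc a z) - m.real (Ioc a y) := by
  have hsub : Ioc a y ⊆ Ioc a z := Ioc_subset_Ioc_right hyz
  have hsub' : Ioc y z ⊆ Ioc a z := Ioc_subset_Ioc_left hay
  rw [← Ioc_union_Ioc_eq_Ioc hay hyz, measureReal_union (Ioc_disjoint_Ioc_of_le le_rfl)
    measurableSet_Ioc (measure_ne_top_of_subset hsub hz) (measure_ne_top_of_subset hsub' hz)]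
  ring

lemma setIntegral_Ioc_eq_sum_Ioc (m : Measure ℝ) [IsLocallyFiniteMeasure m] {f : ℝ → ℝ}
    {s : ℕ → ℝ} {K : ℕ} (hs : Monotone s) (hf : ContinuousOn f (Icc (s 0) (s K))) :
    ∫ x in Ioc (s 0) (s K), f x ∂m
      = ∑ i ∈ Finset.range K, ∫ x in Ioc (s i) (s (i + 1)), f x ∂m := by
  have hint : ∀ i < K, IntervalIntegrable f m (s i) (s (i + 1)) := fun i hi =>
    (hf.mono (Icc_subset_Icc (hs (Nat.zero_le i)) (hs hi))).intervalIntegrable_of_Icc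
      (hs i.le_succ)
  rw [← intervalIntegral.integral_of_le (hs (Nat.zero_le K)),
    ← intervalIntegral.sum_integral_adjacent_intervals hint]
  exact Finset.sum_congr rfl fun i _ => intervalIntegral.integral_of_le (hs i.le_succ)

lemma abs_setIntegral_Ioc_sub_sum_le (m : Measure ℝ) [IsLocallyFiniteMeasure m] {f : ℝ → ℝ}
    {s : ℕ → ℝ} {K : ℕ} (hs : Monotone s) (hf : ContinuousOn f (Icc (s 0) (s K))) {ε : ℝ}
    (hε : ∀ i < K, ∀ x ∈ Ioc (s i) (s (i + 1)), |f x - f (s i)| ≤ ε) :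
    |∫ x in Ioc (s 0) (s K), f x ∂m
        - ∑ i ∈ Finset.range K, f (s i) * m.real (Ioc (s i) (s (i + 1)))|
      ≤ ε * m.real (Ioc (s 0) (s K)) := by
  have hpiece : ∀ i < K, |∫ x in Ioc (s i) (s (i + 1)), f x ∂m
      - f (s i) * m.real (Ioc (s i) (s (i + 1)))| ≤ ε * m.real (Ioc (s i) (s (i + 1))) := by
    intro i hi
    have hfin : m (Ioc (s i) (s (i + 1))) < ⊤ := measure_Ioc_lt_top
    have hfi : IntegrableOn f (Ioc (s i) (s (i + 1))) m :=
      ((hf.mono (Icc_subset_Icc (hs (Nat.zero_le i)) (hs hi))).intervalIntegrable_of_Icc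
        (hs i.le_succ)).1
    rw [mul_comm (f (s i)), ← smul_eq_mul, ← setIntegral_const,
      ← integral_sub hfi (integrableOn_const hfin.ne)]
    simpa only [Real.norm_eq_abs] using norm_setIntegral_le_of_norm_le_const
      (f := fun x => f x - f (s i)) hfin fun x hx => hε i hi x hx
  have hmass : m.real (Ioc (s 0) (s K)) = ∑ i ∈ Finset.range K, m.real (Ioc (s i) (s (i + 1))) := by
    simpa only [setIntegral_const, smul_eq_mul, mul_one] using
      setIntegral_Ioc_eq_sum_Ioc m (f := fun _ => (1 : ℝ)) hs continuousOn_const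
  rw [setIntegral_Ioc_eq_sum_Ioc m hs hf, hmass, Finset.mul_sum, ← Finset.sum_sub_distrib]
  exact (Finset.abs_sum_le_sum_abs _ _).trans
    (Finset.sum_le_sum fun i hi => hpiece i (Finset.mem_range.mp hi))

lemma exists_monotone_grid {a b δ : ℝ} (hab : a ≤ b) (hδ : 0 < δ) :
    ∃ (K : ℕ) (s : ℕ → ℝ), Monotone s ∧ s 0 = a ∧ s K = b ∧ ∀ i, s (i + 1) - s i < δ := by
  obtain ⟨K, hK⟩ := exists_nat_gt ((b - a) / δ)
  have hKpos : (0 : ℝ) < K := lt_of_le_of_lt (div_nonneg (sub_nonneg.mpr hab) hδ.le) hK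
  refine ⟨K, fun i => a + i * ((b - a) / K), fun i j hij => by dsimp only; gcongr, by simp,
    by field_simp; ring, fun i => ?_⟩
  rw [div_lt_iff₀ hδ] at hK
  have hstep : a + ((i + 1 : ℕ) : ℝ) * ((b - a) / K) - (a + i * ((b - a) / K)) = (b - a) / K := by
    push_cast; ring
  rw [hstep, div_lt_iff₀ hKpos]
  linarith

theorem tendsto_setIntegral_Ioc_of_tendsto_measureReal_Ioc {μ : ℕ → Measure ℝ} {ν : Measure ℝ}
    [∀ n, IsLocallyFiniteMeasure (μ n)] [IsLocallyFiniteMeasure ν] {f : ℝ → ℝ} {a b : ℝ}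
    (hab : a ≤ b) (hf : ContinuousOn f (Icc a b))
    (hμν : ∀ y ∈ Icc a b,
      Tendsto (fun n => (μ n).real (Ioc a y)) atTop (𝓝 (ν.real (Ioc a y)))) :
    Tendsto (fun n => ∫ x in Ioc a b, f x ∂μ n) atTop (𝓝 (∫ x in Ioc a b, f x ∂ν)) := by
  refine tendsto_of_forall_eventually_abs_sub_le (C := 2 * ν.real (Ioc a b) + 2) fun ε hε => ?_
  obtain ⟨δ, hδ, hfδ⟩ := Metric.uniformContinuousOn_iff.mp
    (isCompact_Icc.uniformContinuousOn_of_continuous hf) ε hε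
  obtain ⟨K, s, hs, hs0, hsK, hmesh⟩ := exists_monotone_grid hab hδ
  have hsmem : ∀ i ≤ K, s i ∈ Icc a b := fun i hi => ⟨hs0 ▸ hs (Nat.zero_le i), hsK ▸ hs hi⟩
  have hstep : ∀ i < K, ∀ x ∈ Ioc (s i) (s (i + 1)), |f x - f (s i)| ≤ ε := by
    intro i hi x hx
    have hxmem : x ∈ Icc a b := ⟨(hsmem i hi.le).1.trans hx.1.le, hx.2.trans (hsmem _ hi).2⟩
    have hdist : dist x (s i) < δ := by
      rw [Real.dist_eq, abs_of_pos (sub_pos.mpr hx.1)]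
      linarith [hx.2, hmesh i]
    exact (hfδ x hxmem (s i) (hsmem i hi.le) hdist).le
  set R : Measure ℝ → ℝ := fun m =>
    ∑ i ∈ Finset.range K, f (s i) * m.real (Ioc (s i) (s (i + 1)))
  have herr : ∀ (m : Measure ℝ) [IsLocallyFiniteMeasure m],
      |∫ x in Ioc a b, f x ∂m - R m| ≤ ε * m.real (Ioc a b) := fun m _ => by
    simpa only [hs0, hsK] using abs_setIntegral_Ioc_sub_sum_le m hs (hs0 ▸ hsK ▸ hf) hstep
  have hRlim : Tendsto (fun n => R (μ n)) atTop (𝓝 (R ν)) := by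
    refine tendsto_finsetSum _ fun i hi => (Tendsto.const_mul _ ?_)
    have hi : i < K := Finset.mem_range.mp hi
    have hdiff : ∀ (m : Measure ℝ) [IsLocallyFiniteMeasure m], m.real (Ioc (s i) (s (i + 1)))
        = m.real (Ioc a (s (i + 1))) - m.real (Ioc a (s i)) := fun m _ =>
      measureReal_Ioc_eq_sub m (hsmem i hi.le).1 (hs i.le_succ) measure_Ioc_lt_top.ne
    simp only [hdiff]
    exact (hμν _ (hsmem _ hi)).sub (hμν _ (hsmem i hi.le))
  filter_upwards [Metric.tendsto_nhds.mp hRlim ε hε,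
    (hμν b ⟨hab, le_rfl⟩).eventually (gt_mem_nhds (lt_add_one _))] with n hRn hmass
  have h1 := herr (μ n)
  have h2 := herr ν
  calc |∫ x in Ioc a b, f x ∂μ n - ∫ x in Ioc a b, f x ∂ν|
      ≤ ε * (μ n).real (Ioc a b) + ε + ε * ν.real (Ioc a b) := by
        rw [Real.dist_eq, abs_lt] at hRn; rw [abs_le] at h1 h2 ⊢; constructor <;> linarith
    _ ≤ ε * (2 * ν.real (Ioc a b) + 2) := by nlinarith

lemma setIntegral_finsetSum_smul_dirac {ι α : Type*} [MeasurableSpace α]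
    [MeasurableSingletonClass α] (s : Finset ι) (c : ι → ℝ≥0) (x : ι → α) (f : α → ℝ)
    {A : Set α} (hA : MeasurableSet A) [DecidablePred (· ∈ A)] :
    ∫ y in A, f y ∂(∑ j ∈ s, c j • Measure.dirac (x j))
      = ∑ j ∈ s, if x j ∈ A then f (x j) * c j else 0 := by
  rw [← integral_indicator hA, integral_finsetSum_measure]
  · refine Finset.sum_congr rfl fun j _ => ?_
    rw [integral_smul_nnreal_measure, integral_dirac, NNReal.smul_def, smul_eq_mul]
    split_ifs with h <;> simp [h, mul_comm]
  · intro j _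
    exact (integrable_dirac (by finiteness)).smul_measure_nnreal

lemma tendsto_integral_mul_of_tendstoUniformlyOn {α ι : Type*} [MeasurableSpace α]
    {μ : Measure α} {l : Filter ι} {s : Set α} (hs : μ s ≠ ⊤) {g : α → ℝ} {G : ℝ}
    (hg : ∀ x ∈ s, ‖g x‖ ≤ G) {F : ι → α → ℝ} {f : α → ℝ}
    (hF : ∀ i, Integrable (fun x => g x * F i x) μ) (hf : Integrable (fun x => g x * f x) μ)
    (hFs : ∀ i, ∀ x ∉ s, F i x = 0) (hfs : ∀ x ∉ s, f x = 0) (h : TendstoUniformlyOn F f l s) :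
    Tendsto (fun i => ∫ x, g x * F i x ∂μ) l (𝓝 (∫ x, g x * f x ∂μ)) := by
  refine tendsto_of_forall_eventually_abs_sub_le (C := G * μ.real s) fun ε hε => ?_
  filter_upwards [Metric.tendstoUniformlyOn_iff.mp h ε hε] with i hi
  have hbound : ∀ x ∈ s, ‖g x * F i x - g x * f x‖ ≤ G * ε := fun x hx => by
    rw [← mul_sub, norm_mul]
    exact mul_le_mul (hg x hx) (by rw [← dist_eq_norm, dist_comm]; exact (hi x hx).le)
      (norm_nonneg _) ((norm_nonneg _).trans (hg x hx))
  rw [← integral_sub (hF i) hf, ← setIntegral_eq_integral_of_forall_compl_eq_zero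
    fun x hx => by simp [hFs i x hx, hfs x hx], ← Real.norm_eq_abs]
  calc ‖∫ x in s, g x * F i x - g x * f x ∂μ‖ ≤ G * ε * μ.real s :=
        norm_setIntegral_le_of_norm_le_const hs.lt_top hbound
    _ = ε * (G * μ.real s) := by ring

lemma integral_uIoc_abs_sub_pow (m : ℕ) (a b : ℝ) :
    ((m : ℝ) + 1) * ∫ x in uIoc a b, |b - x| ^ m = |b - a| ^ (m + 1) := by
  rcases le_total a b with hab | hab
  · rw [uIoc_of_le hab, ← intervalIntegral.integral_of_le hab,
      intervalIntegral.integral_congr (g := fun x => (b - x) ^ m) fun x hx => ?_,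
      intervalIntegral.integral_comp_sub_left (fun x => x ^ m), sub_self, integral_pow,
      abs_of_nonneg (sub_nonneg.2 hab)]
    · field_simp; ring
    · rw [uIcc_of_le hab] at hx
      simp [abs_of_nonneg (sub_nonneg.2 hx.2)]
  · rw [uIoc_of_ge hab, ← intervalIntegral.integral_of_le hab,
      intervalIntegral.integral_congr (g := fun x => (x - b) ^ m) fun x hx => ?_,
      intervalIntegral.integral_comp_sub_right (fun x => x ^ m), sub_self, integral_pow,
      abs_of_nonpos (sub_nonpos.2 hab)]
    · field_simp; ring
    · rw [uIcc_of_le hab] at hx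
      simp [abs_sub_comm b, abs_of_nonneg (sub_nonneg.2 hx.1)]

lemma abs_mul_pow_sub_integral_mul_abs_sub_pow_le {g : ℝ → ℝ} {a b ε : ℝ} (m : ℕ)
    (hg : ContinuousOn g (uIcc a b)) (hε : ∀ x ∈ uIoc a b, |g x - g a| ≤ ε) :
    |g a * |b - a| ^ (m + 1) - ((m : ℝ) + 1) * ∫ x in uIoc a b, g x * |b - x| ^ m|
      ≤ ε * |b - a| ^ (m + 1) := by
  have hq : ContinuousOn (fun x => |b - x| ^ m) (uIcc a b) := by fun_prop
  have hint : ∀ h : ℝ → ℝ, ContinuousOn h (uIcc a b) → IntegrableOn h (uIoc a b) := fun h hh =>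
    (hh.integrableOn_compact isCompact_uIcc).mono_set uIoc_subset_uIcc
  have hdiff : ∫ x in uIoc a b, (g x - g a) * |b - x| ^ m
      = (∫ x in uIoc a b, g x * |b - x| ^ m) - g a * ∫ x in uIoc a b, |b - x| ^ m := by
    simp_rw [sub_mul]
    rw [integral_sub (hint (fun x => g x * |b - x| ^ m) (hg.mul hq)) ((hint _ hq).const_mul (g a)),
      integral_const_mul]
  have hbound : |∫ x in uIoc a b, (g x - g a) * |b - x| ^ m|
      ≤ ∫ x in uIoc a b, ε * |b - x| ^ m := by
    rw [← Real.norm_eq_abs]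
    refine norm_integral_le_of_norm_le ((hint _ hq).const_mul ε)
      ((ae_restrict_iff' measurableSet_uIoc).2 (Eventually.of_forall fun x hx => ?_))
    have hpow : 0 ≤ |b - x| ^ m := by positivity
    rw [Real.norm_eq_abs, abs_mul, abs_of_nonneg hpow]
    exact mul_le_mul_of_nonneg_right (hε x hx) hpow
  rw [← integral_uIoc_abs_sub_pow m a b]
  calc |g a * (((m : ℝ) + 1) * ∫ x in uIoc a b, |b - x| ^ m)
        - ((m : ℝ) + 1) * ∫ x in uIoc a b, g x * |b - x| ^ m|
      = |((m : ℝ) + 1) * ∫ x in uIoc a b, (g x - g a) * |b - x| ^ m| := by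
        rw [hdiff, abs_sub_comm]; ring_nf
    _ = ((m : ℝ) + 1) * |∫ x in uIoc a b, (g x - g a) * |b - x| ^ m| := by
        rw [abs_mul, abs_of_pos (by positivity)]
    _ ≤ ((m : ℝ) + 1) * ∫ x in uIoc a b, ε * |b - x| ^ m := by gcongr
    _ = ε * (((m : ℝ) + 1) * ∫ x in uIoc a b, |b - x| ^ m) := by
        rw [integral_const_mul]; ring

namespace PartitionSeq

variable {T : ℝ} (P : PartitionSeq T) (n : ℕ)

lemma pt_strictMonoOn : StrictMonoOn (P.pt n) (Iic (P.N n)) :=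
  strictMonoOn_Iic_of_lt_succ fun j hj => P.pt_mono n j hj

lemma pt_mem_Icc {j : ℕ} (hj : j ≤ P.N n) : P.pt n j ∈ Icc 0 T := by
  have hmono := (P.pt_strictMonoOn n).monotoneOn
  refine ⟨?_, ?_⟩
  · simpa only [P.pt_zero] using hmono (mem_Iic.2 (Nat.zero_le _)) (mem_Iic.2 hj) (Nat.zero_le j)
  · simpa only [P.pt_last] using hmono (mem_Iic.2 hj) (mem_Iic.2 le_rfl) hj

lemma Icc_pt_subset {j : ℕ} (hj : j < P.N n) : Icc (P.pt n j) (P.pt n (j + 1)) ⊆ Icc 0 T :=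
  Icc_subset_Icc (P.pt_mem_Icc n hj.le).1 (P.pt_mem_Icc n hj).2

lemma pt_pos {j : ℕ} (hj0 : j ≠ 0) (hj : j ≤ P.N n) : 0 < P.pt n j := by
  simpa only [P.pt_zero] using
    P.pt_strictMonoOn n (mem_Iic.2 (Nat.zero_le _)) (mem_Iic.2 hj) (Nat.pos_of_ne_zero hj0)

lemma sum_ite_pt_nonpos {M : Type*} [AddCommMonoid M] (F : ℕ → M) :
    ∑ j ∈ Finset.range (P.N n), (if P.pt n j ≤ 0 then F j else 0) = F 0 := by
  rw [Finset.sum_eq_single_of_mem 0 (Finset.mem_range.2 (P.pos n)), if_pos (P.pt_zero n).le]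
  intro j hj hj0
  rw [if_neg (P.pt_pos n hj0 (Finset.mem_range.1 hj).le).not_ge]

end PartitionSeq

lemma abs_sub_le_oscP {T : ℝ} (P : PartitionSeq T) {S : ℝ → ℝ} (hS : ContinuousOn S (Icc 0 T))
    {n j : ℕ} (hj : j < P.N n) {u v : ℝ} (hu : u ∈ Icc (P.pt n j) (P.pt n (j + 1)))
    (hv : v ∈ Icc (P.pt n j) (P.pt n (j + 1))) : |S u - S v| ≤ oscP S P n := by
  obtain ⟨C, hC⟩ := isCompact_Icc.exists_bound_of_continuousOn hS
  refine le_csSup ⟨2 * C, ?_⟩ ⟨j, hj, u, hu, v, hv, rfl⟩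
  rintro _ ⟨i, hi, u', hu', v', hv', rfl⟩
  have h1 := hC u' (P.Icc_pt_subset n hi hu')
  have h2 := hC v' (P.Icc_pt_subset n hi hv')
  rw [Real.norm_eq_abs] at h1 h2
  linarith [abs_sub (S u') (S v')]

lemma uIcc_subset_image_of_continuousOn {T : ℝ} (P : PartitionSeq T) {S : ℝ → ℝ}
    (hS : ContinuousOn S (Icc 0 T)) {n j : ℕ} (hj : j < P.N n) :
    uIcc (S (P.pt n j)) (S (P.pt n (j + 1))) ⊆ S '' Icc 0 T := by
  have hsub : uIcc (P.pt n j) (P.pt n (j + 1)) ⊆ Icc 0 T := by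
    rw [uIcc_of_le (P.pt_mono n j hj).le]; exact P.Icc_pt_subset n hj
  exact (intermediate_value_uIcc (hS.mono hsub)).trans (image_mono hsub)

lemma tendsto_pvarSum_zero {T : ℝ} (P : PartitionSeq T) {S : ℝ → ℝ} (hS : ContinuousOn S (Icc 0 T))
    (hosc : Tendsto (oscP S P) atTop (𝓝 0)) {p : ℕ} (hp : p ≠ 0) :
    Tendsto (fun n => pvarSum S P p n 0) atTop (𝓝 0) := by
  have hsum : ∀ n, pvarSum S P p n 0 = |S (P.pt n 1) - S (P.pt n 0)| ^ p := fun n => by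
    simp only [pvarSum, Real.rpow_natCast]
    exact P.sum_ite_pt_nonpos n _
  have hle : ∀ n, |S (P.pt n 1) - S (P.pt n 0)| ^ p ≤ oscP S P n ^ p := fun n => by
    have h01 := (P.pt_mono n 0 (P.pos n)).le
    exact pow_le_pow_left₀ (abs_nonneg _)
      (abs_sub_le_oscP P hS (P.pos n) (right_mem_Icc.2 h01) (left_mem_Icc.2 h01)) p
  simp only [hsum]
  refine squeeze_zero (fun n => by positivity) hle ?_
  simpa [zero_pow hp] using hosc.pow p

lemma eventually_forall_abs_sub_le_of_tendsto_oscP {T : ℝ} (P : PartitionSeq T) {S : ℝ → ℝ}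
    (hS : ContinuousOn S (Icc 0 T)) (hosc : Tendsto (oscP S P) atTop (𝓝 0)) {g : ℝ → ℝ}
    (hg : ContinuousOn g (S '' Icc 0 T)) {ε : ℝ} (hε : 0 < ε) :
    ∀ᶠ n in atTop, ∀ j < P.N n, ∀ x ∈ uIoc (S (P.pt n j)) (S (P.pt n (j + 1))),
      |g x - g (S (P.pt n j))| ≤ ε := by
  obtain ⟨δ, hδ, hgδ⟩ := Metric.uniformContinuousOn_iff.mp
    ((isCompact_Icc.image_of_continuousOn hS).uniformContinuousOn_of_continuous hg) ε hε
  filter_upwards [hosc.eventually (gt_mem_nhds hδ)] with n hn j hj x hx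
  have hx' : x ∈ uIcc (S (P.pt n j)) (S (P.pt n (j + 1))) := uIoc_subset_uIcc hx
  have h01 := (P.pt_mono n j hj).le
  have hdist : dist x (S (P.pt n j)) < δ :=
    calc |x - S (P.pt n j)| ≤ |S (P.pt n (j + 1)) - S (P.pt n j)| := abs_sub_left_of_mem_uIcc hx'
      _ ≤ oscP S P n := abs_sub_le_oscP P hS hj (right_mem_Icc.2 h01) (left_mem_Icc.2 h01)
      _ < δ := hn
  have himage := uIcc_subset_image_of_continuousOn P hS hj
  exact (hgδ x (himage hx') _ (himage left_mem_uIcc) hdist).le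

noncomputable def pvarMeasure {T : ℝ} (S : ℝ → ℝ) (P : PartitionSeq T) (p n : ℕ) : Measure ℝ :=
  ∑ j ∈ Finset.range (P.N n), ‖S (P.pt n (j + 1)) - S (P.pt n j)‖₊ ^ p • Measure.dirac (P.pt n j)

section pvarMeasure

variable {T : ℝ} (S : ℝ → ℝ) (P : PartitionSeq T) (p n : ℕ)

instance : IsFiniteMeasure (pvarMeasure S P p n) := by
  unfold pvarMeasure; infer_instance

lemma setIntegral_pvarMeasure (f : ℝ → ℝ) {A : Set ℝ} (hA : MeasurableSet A)
    [DecidablePred (· ∈ A)] :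
    ∫ x in A, f x ∂pvarMeasure S P p n = ∑ j ∈ Finset.range (P.N n),
      if P.pt n j ∈ A then f (P.pt n j) * |S (P.pt n (j + 1)) - S (P.pt n j)| ^ p else 0 := by
  rw [pvarMeasure, setIntegral_finsetSum_smul_dirac _ _ _ f hA]
  simp only [NNReal.coe_pow, coe_nnnorm, Real.norm_eq_abs]

lemma measureReal_pvarMeasure_Ioc_zero {y : ℝ} (hy : 0 ≤ y) :
    (pvarMeasure S P p n).real (Ioc 0 y) = pvarSum S P p n y - pvarSum S P p n 0 := by
  have h := setIntegral_pvarMeasure S P p n (fun _ => 1) (measurableSet_Ioc (a := 0) (b := y))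
  rw [setIntegral_const, smul_eq_mul, mul_one] at h
  rw [h, pvarSum, pvarSum, ← Finset.sum_sub_distrib]
  refine Finset.sum_congr rfl fun j _ => ?_
  simp only [Real.rpow_natCast, mem_Ioc, one_mul]
  rcases le_or_gt (P.pt n j) 0 with h0 | h0
  · simp [h0, h0.trans hy, h0.not_gt]
  · simp [h0, h0.not_ge]

end pvarMeasure

noncomputable def pvarRiemannSum {T : ℝ} (f S : ℝ → ℝ) (P : PartitionSeq T) (p n : ℕ) (t : ℝ) : ℝ :=
  ∑ j ∈ Finset.range (P.N n),
    if P.pt n j ≤ t then f (P.pt n j) * |S (P.pt n (j + 1)) - S (P.pt n j)| ^ p else 0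

section pvarRiemannSum

variable {T : ℝ} (f S : ℝ → ℝ) (P : PartitionSeq T) (p : ℕ)

lemma pvarRiemannSum_eq_add_setIntegral (n : ℕ) {t : ℝ} (ht : 0 ≤ t) :
    pvarRiemannSum f S P p n t
      = f 0 * pvarSum S P p n 0 + ∫ u in Ioc 0 t, f u ∂pvarMeasure S P p n := by
  rw [setIntegral_pvarMeasure _ _ _ _ _ measurableSet_Ioc, pvarRiemannSum, pvarSum,
    Finset.mul_sum, ← Finset.sum_add_distrib]
  refine Finset.sum_congr rfl fun j hj => ?_
  simp only [Real.rpow_natCast, mem_Ioc]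
  rcases (P.pt_mem_Icc n (Finset.mem_range.1 hj).le).1.eq_or_lt with h0 | h0
  · simp [← h0, ht]
  · simp [h0, h0.not_ge]

theorem tendsto_pvarRiemannSum (V : StieltjesFunction ℝ) {t : ℝ} (ht : 0 ≤ t)
    (hvar : ∀ s ∈ Icc 0 t, Tendsto (fun n => pvarSum S P p n s) atTop (𝓝 (V s)))
    (hf : ContinuousOn f (Icc 0 t)) :
    Tendsto (fun n => pvarRiemannSum f S P p n t) atTop
      (𝓝 (f 0 * V 0 + ∫ u in Ioc 0 t, f u ∂V.measure)) := by
  have hV0 := hvar 0 (left_mem_Icc.2 ht)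
  have hint : Tendsto (fun n => ∫ u in Ioc 0 t, f u ∂pvarMeasure S P p n) atTop
      (𝓝 (∫ u in Ioc 0 t, f u ∂V.measure)) := by
    refine tendsto_setIntegral_Ioc_of_tendsto_measureReal_Ioc ht hf fun y hy => ?_
    simp only [measureReal_pvarMeasure_Ioc_zero _ _ _ _ hy.1, measureReal_def, V.measure_Ioc,
      ENNReal.toReal_ofReal (sub_nonneg.2 (V.mono hy.1))]
    exact (hvar y hy).sub hV0
  simpa only [pvarRiemannSum_eq_add_setIntegral f S P p _ ht] using (hV0.const_mul (f 0)).add hint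

end pvarRiemannSum

section discLT

variable {T : ℝ} {S : ℝ → ℝ} (P : PartitionSeq T) (p n : ℕ) (t : ℝ)

lemma discLT_eq_zero_of_notMem_image (hS : ContinuousOn S (Icc 0 T)) {x : ℝ}
    (hx : x ∉ S '' Icc 0 T) : discLT S P p n t x = 0 := by
  refine Finset.sum_eq_zero fun j hj => ?_
  have hxj : x ∉ uIoc (S (P.pt n j)) (S (P.pt n (j + 1))) := fun hmem =>
    hx (uIcc_subset_image_of_continuousOn P hS (Finset.mem_range.1 hj) (uIoc_subset_uIcc hmem))
  simp [indicator_of_notMem hxj]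

lemma mul_discLT_eq_sum (g : ℝ → ℝ) (x : ℝ) :
    g x * discLT S P p n t x = ∑ j ∈ Finset.range (P.N n),
      if P.pt n j ≤ t then
        (uIoc (S (P.pt n j)) (S (P.pt n (j + 1)))).indicator
          (fun y => g y * |S (P.pt n (j + 1)) - y| ^ (p - 1)) x
      else 0 := by
  rw [discLT, Finset.mul_sum]
  refine Finset.sum_congr rfl fun j _ => ?_
  split_ifs
  · simp only [indicator, mul_ite, mul_zero]
  · rw [mul_zero]

lemma integrable_ite_indicator_uIoc {g : ℝ → ℝ} (hg : Continuous g) (c : Prop) [Decidable c]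
    (a b : ℝ) (k : ℕ) :
    Integrable (fun x => if c then (uIoc a b).indicator (fun y => g y * |b - y| ^ k) x else 0) := by
  split_ifs
  · exact (Continuous.integrableOn_Ioc (by fun_prop)).integrable_indicator measurableSet_uIoc
  · exact integrable_zero _ _ _

lemma integrable_mul_discLT {g : ℝ → ℝ} (hg : Continuous g) :
    Integrable (fun x => g x * discLT S P p n t x) := by
  simp_rw [mul_discLT_eq_sum]
  exact integrable_finsetSum _ fun j _ => integrable_ite_indicator_uIoc hg _ _ _ _

lemma integral_mul_discLT {g : ℝ → ℝ} (hg : Continuous g) :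
    ∫ x, g x * discLT S P p n t x = ∑ j ∈ Finset.range (P.N n),
      if P.pt n j ≤ t then
        ∫ x in uIoc (S (P.pt n j)) (S (P.pt n (j + 1))), g x * |S (P.pt n (j + 1)) - x| ^ (p - 1)
      else 0 := by
  simp_rw [mul_discLT_eq_sum]
  rw [integral_finsetSum _ fun j _ => integrable_ite_indicator_uIoc hg _ _ _ _]
  refine Finset.sum_congr rfl fun j _ => ?_
  split_ifs
  · exact integral_indicator measurableSet_uIoc
  · exact integral_zero _ _

end discLT

section occupation

variable {T : ℝ} {S : ℝ → ℝ} (P : PartitionSeq T) (m : ℕ) {g : ℝ → ℝ}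

lemma abs_pvarRiemannSum_sub_integral_mul_discLT_le (hg : Continuous g) (n : ℕ) (t : ℝ) {ε : ℝ}
    (hε : ∀ j < P.N n, ∀ x ∈ uIoc (S (P.pt n j)) (S (P.pt n (j + 1))),
      |g x - g (S (P.pt n j))| ≤ ε) :
    |pvarRiemannSum (g ∘ S) S P (m + 1) n t
        - ((m + 1 : ℕ) : ℝ) * ∫ x, g x * discLT S P (m + 1) n t x|
      ≤ ε * pvarSum S P (m + 1 : ℕ) n t := by
  rw [integral_mul_discLT P _ n t hg, pvarRiemannSum, pvarSum, Finset.mul_sum, Finset.mul_sum,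
    ← Finset.sum_sub_distrib]
  refine (Finset.abs_sum_le_sum_abs _ _).trans (Finset.sum_le_sum fun j hj => ?_)
  split_ifs
  · rw [Real.rpow_natCast]
    simpa only [Function.comp_apply, Nat.add_sub_cancel, Nat.cast_add, Nat.cast_one] using
      abs_mul_pow_sub_integral_mul_abs_sub_pow_le m hg.continuousOn (hε j (Finset.mem_range.1 hj))
  · simp

theorem tendsto_pvarRiemannSum_sub_integral_mul_discLT (hS : ContinuousOn S (Icc 0 T))
    (hosc : Tendsto (oscP S P) atTop (𝓝 0)) (hg : Continuous g) {t v : ℝ}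
    (hv : Tendsto (fun n => pvarSum S P (m + 1 : ℕ) n t) atTop (𝓝 v)) :
    Tendsto (fun n => pvarRiemannSum (g ∘ S) S P (m + 1) n t
        - ((m + 1 : ℕ) : ℝ) * ∫ x, g x * discLT S P (m + 1) n t x) atTop (𝓝 0) := by
  refine tendsto_of_forall_eventually_abs_sub_le (C := v + 1) fun ε hε => ?_
  filter_upwards [eventually_forall_abs_sub_le_of_tendsto_oscP P hS hosc hg.continuousOn hε,
    hv.eventually (gt_mem_nhds (lt_add_one v))] with n hn hvn
  rw [sub_zero]
  exact (abs_pvarRiemannSum_sub_integral_mul_discLT_le P m hg n t hn).trans (by gcongr)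

end occupation

lemma HasCLT.eq_zero_of_notMem_image {T : ℝ} {P : PartitionSeq T} {p : ℕ} {S : ℝ → ℝ}
    {L : ℝ → ℝ → ℝ} (hL : HasCLT P p S L) (hS : ContinuousOn S (Icc 0 T)) {t : ℝ}
    (ht : t ∈ Icc 0 T) {x : ℝ} (hx : x ∉ S '' Icc 0 T) : L t x = 0 :=
  tendsto_nhds_unique ((hL.2.1 t ht).tendsto_at x)
    (by simp only [discLT_eq_zero_of_notMem_image P _ _ _ hS hx, tendsto_const_nhds])

theorem occupation_density_formula_general {T : ℝ} (P : PartitionSeq T)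
    (p : ℕ) (hp2 : 2 ≤ p)
    (S : ℝ → ℝ) (hS : ContinuousOn S (Icc 0 T))
    (V : StieltjesFunction ℝ)
    (hvar : ∀ t ∈ Icc (0 : ℝ) T, Tendsto (fun n => pvarSum S P (p : ℝ) n t) atTop (nhds (V t)))
    (L : ℝ → ℝ → ℝ) (hL : HasCLT P p S L) :
    ∀ g : ℝ → ℝ, Continuous g → ∀ t ∈ Icc (0 : ℝ) T,
      (∫ u in Ioc (0 : ℝ) t, g (S u) ∂V.measure) = (p : ℝ) * ∫ x, g x * L t x := by
  intro g hg t ht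
  obtain ⟨m, rfl⟩ : ∃ m, p = m + 1 := ⟨p - 1, by omega⟩
  have hV0 : V 0 = 0 := tendsto_nhds_unique (hvar 0 (left_mem_Icc.2 (ht.1.trans ht.2)))
    (tendsto_pvarSum_zero P hS hL.1 m.succ_ne_zero)
  have hRS := tendsto_pvarRiemannSum (g ∘ S) S P (m + 1) V ht.1
    (fun s hs => hvar s ⟨hs.1, hs.2.trans ht.2⟩)
    (hg.comp_continuousOn (hS.mono (Icc_subset_Icc_right ht.2)))
  rw [hV0, mul_zero, zero_add] at hRS
  have hK : IsCompact (S '' Icc 0 T) := isCompact_Icc.image_of_continuousOn hS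
  obtain ⟨G, hG⟩ := hK.exists_bound_of_continuousOn hg.continuousOn
  have hgL : Integrable (fun x => g x * L t x) :=
    (hg.mul (hL.2.2.comp (Continuous.prodMk_right t))).integrable_of_hasCompactSupport
      (HasCompactSupport.intro hK fun x hx => by simp [hL.eq_zero_of_notMem_image hS ht hx])
  have hlocal := tendsto_integral_mul_of_tendstoUniformlyOn hK.measure_lt_top.ne hG
    (fun n => integrable_mul_discLT P _ n t hg) hgL
    (fun n x hx => discLT_eq_zero_of_notMem_image P _ n t hS hx)
    (fun x hx => hL.eq_zero_of_notMem_image hS ht hx) (hL.2.1 t ht).tendstoUniformlyOn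
  refine tendsto_nhds_unique hRS ?_
  simpa using (tendsto_pvarRiemannSum_sub_integral_mul_discLT P m hS hL.1 hg (hvar t ht)).add
    (hlocal.const_mul ((m + 1 : ℕ) : ℝ))

/-- Occupation density formula: if `S ∈ V_p(π)` with continuous nondecreasing `p`-th
variation `V = [S]^p` (realized as a continuous Stieltjes function) and `S` admits a
continuous local time `L` of order `p` along `π`, then for every continuous `g : ℝ → ℝ`
and `t ∈ [0,T]`, `∫_0^t g(S(u)) d[S]^p(u) = p ∫_ℝ g(x) L_t(x) dx`. -/
theorem occupation_density_formula {T : ℝ} (hT : 0 < T) (P : PartitionSeq T)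
    (p : ℕ) (hp : Even p) (hp2 : 2 ≤ p)
    (S : ℝ → ℝ) (hS : ContinuousOn S (Icc 0 T))
    (V : StieltjesFunction ℝ) (hVc : Continuous ⇑V)
    (hvar : ∀ t ∈ Icc (0 : ℝ) T, Tendsto (fun n => pvarSum S P (p : ℝ) n t) atTop (nhds (V t)))
    (L : ℝ → ℝ → ℝ) (hL : HasCLT P p S L) :
    ∀ g : ℝ → ℝ, Continuous g → ∀ t ∈ Icc (0 : ℝ) T,
      (∫ u in Ioc (0 : ℝ) t, g (S u) ∂V.measure) = (p : ℝ) * ∫ x, g x * L t x :=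
  occupation_density_formula_general P p hp2 S hS V hvar L hL
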